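/- In the d-dimensional Hamming cube, if A is a subset of the even vertices with |A| ≤ d^C for a fixed constant C (and d sufficiently large), then |A| ≤ O(1/d)·|N(A)|; equivalently, there is a constant c > 0 such that |N(A)| ≥ c·d·|A| whenever |A| ≤ d^C. -/

import Mathlib

/-- The `d`-dimensional Hamming cube: vertices are `{0,1}^d`,
adjacency = Hamming distance exactly 1. -/
def cube (d : ℕ) : SimpleGraph (Fin d → Bool) where
  Adj x y := hammingDist x y = 1
  symm.symm x y h := by show hammingDist y x = 1; rwa [hammingDist_comm]
  loopless.irrefl x h := by simp [show hammingDist x x = 1 from h] at h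

/-- A vertex is even if it has an even number of `1`-coordinates. -/
def isEvenVtx {d : ℕ} (v : Fin d → Bool) : Prop :=
  Even (Finset.univ.filter (fun i => v i = true)).card

/-- Neighborhood of a set of vertices. -/
def nbhd {d : ℕ} (A : Set (Fin d → Bool)) : Set (Fin d → Bool) :=
  {v | ∃ a ∈ A, (cube d).Adj a v}

/-- `s` is an independent set in `G`. -/
def IsIndepSet {V : Type*} (G : SimpleGraph V) (s : Set V) : Prop :=
  s.Pairwise (fun u v => ¬ G.Adj u v)

/-- Balanced independent sets of the Hamming cube. -/
def balancedIndep (d : ℕ) : Set (Set (Fin d → Bool)) :=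
  {I | IsIndepSet (cube d) I ∧
    (I ∩ {v | isEvenVtx v}).ncard = (I ∩ {v | ¬ isEvenVtx v}).ncard}

/-- The number of balanced independent sets in `Q_d`. -/
noncomputable def bis (d : ℕ) : ℕ := (balancedIndep d).ncard

/-- `A` is `k`-linked: any two vertices of `A` are joined by a chain within `A`
whose consecutive elements are at Hamming distance at most `k`. -/
def kLinked (d k : ℕ) (A : Set (Fin d → Bool)) : Prop :=
  ∀ u ∈ A, ∀ w ∈ A,
    Relation.ReflTransGen (fun a b => b ∈ A ∧ hammingDist a b ≤ k) u w

/-- `B` is a 2-component of `A`: a maximal 2-linked subset. -/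
def isTwoComponent (d : ℕ) (A B : Set (Fin d → Bool)) : Prop :=
  B ⊆ A ∧ B.Nonempty ∧ kLinked d 2 B ∧
    ∀ B', B ⊆ B' → B' ⊆ A → kLinked d 2 B' → B' = B

/-- The closure `[A] = {v : N(v) ⊆ N(A)}`. -/
def closure' {d : ℕ} (A : Set (Fin d → Bool)) : Set (Fin d → Bool) :=
  {v | (cube d).neighborSet v ⊆ nbhd A}

/-- Binary entropy function (base-2 logs; `H 0 = H 1 = 0` by `logb` conventions). -/
noncomputable def binH (a : ℝ) : ℝ :=
  -(a * Real.logb 2 a) - (1 - a) * Real.logb 2 (1 - a)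

/-!
Split `A` into its Hamming-weight layers, read as families of `k`-subsets of `Fin d`. Fix
`t = ⌈C⌉ + 1`; for `d` large, `d ^ C ≤ C(d/2 + t, t)`. A `k`-uniform family `𝒜` with
`|𝒜| ≤ C(k + t, k)` has `k |𝒜| ≤ (2t + 1) |∂𝒜|`: by Kruskal–Katona it suffices to check this for
the colex initial segment ending at `s = {a₁ < ⋯ < a_k}`, which has `1 + ∑ C(aᵢ, i)` elements and a
shadow of size `∑ C(aᵢ, i - 1)`; the size bound forces `aᵢ < i + t`, so
`i C(aᵢ, i) = (aᵢ + 1 - i) C(aᵢ, i - 1) ≤ t C(aᵢ, i - 1)`, and Chebyshev's sum inequality averages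
out the factor `i`. Layers with `k ≥ d/2` are handled by the lower shadow, the others by the upper
shadow (complementation). Shadows of distinct layers are disjoint and lie in `N(A)`.
-/

open Finset
open scoped FinsetFamily symmDiff

theorem Nat.choose_le_choose_add_add (m r j : ℕ) : m.choose r ≤ (m + j).choose (r + j) := by
  induction j with
  | zero => rfl
  | succ j ih => exact ih.trans (by rw [← add_assoc, ← add_assoc, Nat.choose_succ_succ']; omega)

namespace Finset

section Rank

variable {α : Type*} [LinearOrder α] {s : Finset α} {a b : α}

def rankIn (s : Finset α) (a : α) : ℕ := #{b ∈ s | b ≤ a}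

lemma rankIn_add_card_filter_lt (s : Finset α) (a : α) :
    rankIn s a + #{b ∈ s | a < b} = #s := by
  simpa only [rankIn, not_le] using card_filter_add_card_filter_not (s := s) (· ≤ a)

lemma rankIn_pos (ha : a ∈ s) : 0 < rankIn s a :=
  card_pos.2 ⟨a, mem_filter.2 ⟨ha, le_rfl⟩⟩

lemma rankIn_lt_rankIn (hb : b ∈ s) (hab : a < b) : rankIn s a < rankIn s b := by
  refine card_lt_card ⟨monotone_filter_right _ fun c _ hc => hc.trans hab.le, fun h => ?_⟩
  exact (mem_filter.1 (h (mem_filter.2 ⟨hb, le_rfl⟩))).2.not_gt hab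

lemma rankIn_mono (hab : a ≤ b) : rankIn s a ≤ rankIn s b :=
  card_le_card (monotone_filter_right _ fun _ _ hc => hc.trans hab)

lemma rankIn_erase_of_le {m : α} (hm : m ∈ s) (hma : m ≤ a) :
    rankIn (s.erase m) a = rankIn s a - 1 := by
  rw [rankIn, filter_erase, card_erase_of_mem (mem_filter.2 ⟨hm, hma⟩), rankIn]

lemma rankIn_min' (hs : s.Nonempty) : rankIn s (s.min' hs) = 1 := by
  rw [rankIn, card_eq_one]
  refine ⟨s.min' hs, eq_singleton_iff_unique_mem.2 ⟨mem_filter.2 ⟨s.min'_mem hs, le_rfl⟩, ?_⟩⟩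
  exact fun b hb => le_antisymm (mem_filter.1 hb).2 (s.min'_le b (mem_filter.1 hb).1)

lemma rankIn_insert_of_lt {m : α} (ham : a < m) : rankIn (insert m s) a = rankIn s a := by
  rw [rankIn, filter_insert, if_neg ham.not_ge, rankIn]

lemma rankIn_insert_of_forall_lt {m : α} (hm : ∀ c ∈ s, c < m) :
    rankIn (insert m s) m = #s + 1 := by
  have hms : m ∉ s := fun h => (hm m h).false
  rw [rankIn, filter_true_of_mem fun c hc => ?_, card_insert_of_notMem hms]
  rcases mem_insert.1 hc with rfl | hc
  exacts [le_rfl, (hm c hc).le]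

lemma two_mul_sum_rankIn (s : Finset α) : 2 * ∑ a ∈ s, rankIn s a = #s * (#s + 1) := by
  induction s using Finset.induction_on_max with
  | empty => simp
  | insert m s hm ih =>
    have hms : m ∉ s := fun h => (hm m h).false
    rw [sum_insert hms, sum_congr rfl fun a ha => rankIn_insert_of_lt (hm a ha),
      rankIn_insert_of_forall_lt hm, card_insert_of_notMem hms]
    linarith

lemma exists_rankIn_eq (s : Finset α) {m : ℕ} (hm : 0 < m) (hms : m ≤ #s) :
    ∃ a ∈ s, rankIn s a = m := by
  induction s using Finset.induction_on_max generalizing m with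
  | empty => simp at hms; omega
  | insert M s hM ih =>
    have hMs : M ∉ s := fun h => (hM M h).false
    rw [card_insert_of_notMem hMs] at hms
    rcases hms.lt_or_eq with hlt | rfl
    · obtain ⟨a, ha, hrank⟩ := ih hm (by omega)
      exact ⟨a, mem_insert_of_mem ha, (rankIn_insert_of_lt (hM a ha)).trans hrank⟩
    · exact ⟨M, mem_insert_self M s, rankIn_insert_of_forall_lt hM⟩

end Rank

section RankFin

variable {n : ℕ} {s : Finset (Fin n)} {a b : Fin n}

lemma rankIn_le_succ (s : Finset (Fin n)) (a : Fin n) : rankIn s a ≤ a + 1 := by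
  rw [← Fin.card_Iic]
  exact card_le_card fun c hc => mem_Iic.2 (mem_filter.1 hc).2

lemma rankIn_le_rankIn_add (s : Finset (Fin n)) (a b : Fin n) :
    rankIn s b ≤ rankIn s a + ((b : ℕ) - a) := by
  rw [← Fin.card_Ioc]
  refine (card_le_card fun c hc => ?_).trans (card_union_le _ _)
  obtain ⟨hcs, hcb⟩ := mem_filter.1 hc
  rcases le_or_gt c a with hca | hac
  exacts [mem_union_left _ (mem_filter.2 ⟨hcs, hca⟩), mem_union_right _ (mem_Ioc.2 ⟨hac, hcb⟩)]

lemma rankIn_max' (hs : s.Nonempty) : rankIn s (s.max' hs) = #s := by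
  rw [rankIn, filter_true_of_mem fun c hc => s.le_max' c hc]

lemma add_card_le_max'_add_rankIn (hs : s.Nonempty) (ha : a ∈ s) :
    (a : ℕ) + #s ≤ s.max' hs + rankIn s a := by
  have hle : #{c ∈ s | a < c} ≤ (s.max' hs : ℕ) - a := by
    rw [← Fin.card_Ioc]
    exact card_le_card fun c hc =>
      mem_Ioc.2 ⟨(mem_filter.1 hc).2, s.le_max' c (mem_filter.1 hc).1⟩
  have := rankIn_add_card_filter_lt s a
  have : (a : ℕ) ≤ s.max' hs := s.le_max' a ha
  omega

lemma choose_rankIn_le_choose_rankIn (hb : b ∈ s) (hab : a < b) :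
    (a : ℕ).choose (rankIn s a) ≤ (b : ℕ).choose (rankIn s b) := by
  have hr := (rankIn_lt_rankIn hb hab).le
  have hr' := rankIn_le_rankIn_add s a b
  have : (a : ℕ) < b := hab
  calc (a : ℕ).choose (rankIn s a)
      ≤ (a + (rankIn s b - rankIn s a)).choose (rankIn s a + (rankIn s b - rankIn s a)) :=
        Nat.choose_le_choose_add_add _ _ _
    _ ≤ (b : ℕ).choose (rankIn s b) := by
        rw [Nat.add_sub_cancel' hr]
        exact Nat.choose_le_choose _ (by omega)

end RankFin

namespace Colex

variable {n : ℕ} {s u : Finset (Fin n)} {a : Fin n} {t : ℕ}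

-- The `t ≠ s` preceding `s` in colex for which `a` is the largest element of `t ∆ s`.
def initSegBlock (s : Finset (Fin n)) (a : Fin n) : Finset (Finset (Fin n)) :=
  {t | #t = #s ∧ a ∉ t ∧ {b ∈ t | a < b} = {b ∈ s | a < b}}

lemma mem_initSegBlock :
    u ∈ initSegBlock s a ↔ #u = #s ∧ a ∉ u ∧ {b ∈ u | a < b} = {b ∈ s | a < b} := by
  simp [initSegBlock]

lemma initSeg_eq_insert_biUnion_initSegBlock (s : Finset (Fin n)) :
    initSeg s = insert s (s.biUnion (initSegBlock s)) := by
  ext t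
  simp only [mem_initSeg, mem_insert, mem_biUnion, mem_initSegBlock, le_iff_eq_or_lt,
    toColex_inj, lt_iff_exists_filter_lt, mem_sdiff]
  constructor
  · rintro ⟨hcard, rfl | ⟨a, ⟨has, hat⟩, hfilt⟩⟩
    exacts [Or.inl rfl, Or.inr ⟨a, has, hcard.symm, hat, hfilt⟩]
  · rintro (rfl | ⟨a, has, hcard, hat, hfilt⟩)
    exacts [⟨rfl, Or.inl rfl⟩, ⟨hcard.symm, Or.inr ⟨a, ⟨has, hat⟩, hfilt⟩⟩]

lemma card_initSegBlock (s : Finset (Fin n)) (a : Fin n) :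
    #(initSegBlock s a) = (a : ℕ).choose (rankIn s a) := by
  rw [← Fin.card_Iio, ← card_powersetCard]
  symm
  refine card_nbij' (· ∪ {b ∈ s | a < b}) ({b ∈ · | b < a}) ?_ ?_ ?_ ?_
  · intro B hB
    rw [mem_coe, mem_powersetCard] at hB
    have hlt : ∀ b ∈ B, b < a := fun b hb => mem_Iio.1 (hB.1 hb)
    have hdisj : Disjoint B {b ∈ s | a < b} := disjoint_left.2 fun b hb hb' =>
      (hlt b hb).not_gt (mem_filter.1 hb').2
    refine mem_initSegBlock.2 ⟨?_, ?_, ?_⟩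
    · rw [card_union_of_disjoint hdisj, hB.2, rankIn_add_card_filter_lt]
    · simp only [mem_union, mem_filter, lt_irrefl, and_false, or_false]
      exact fun h => (hlt a h).false
    · ext b
      simp only [mem_filter, mem_union]
      grind
  · intro t ht
    obtain ⟨hcard, hat, hfilt⟩ := mem_initSegBlock.1 (mem_coe.1 ht)
    refine mem_coe.2 (mem_powersetCard.2 ⟨fun b hb => mem_Iio.2 (mem_filter.1 hb).2, ?_⟩)
    have hsplit : #{b ∈ t | b < a} + #{b ∈ t | a < b} = #t := by
      rw [← card_filter_add_card_filter_not (s := t) (· < a)]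
      congr 2
      exact filter_congr fun b hb => by
        have : b ≠ a := fun h => hat (h ▸ hb)
        grind
    rw [hfilt, hcard, ← rankIn_add_card_filter_lt s a] at hsplit
    dsimp only
    omega
  · intro B hB
    rw [mem_coe, mem_powersetCard] at hB
    ext b
    have := @hB.1 b
    simp only [mem_filter, mem_union, mem_Iio] at this ⊢
    grind
  · intro t ht
    obtain ⟨hcard, hat, hfilt⟩ := mem_initSegBlock.1 (mem_coe.1 ht)
    rw [← hfilt]
    ext b
    simp only [mem_filter, mem_union]
    grind

lemma pairwiseDisjoint_initSegBlock (s : Finset (Fin n)) :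
    (s : Set (Fin n)).PairwiseDisjoint (initSegBlock s) := by
  have key : ∀ a ∈ s, ∀ a' ∈ s, a < a' → Disjoint (initSegBlock s a) (initSegBlock s a') :=
    fun a _ a' ha' hlt => disjoint_left.2 fun t ht ht' => by
      obtain ⟨-, -, hfilt⟩ := mem_initSegBlock.1 ht
      have : a' ∈ {b ∈ t | a < b} := hfilt ▸ mem_filter.2 ⟨ha', hlt⟩
      exact (mem_initSegBlock.1 ht').2.1 (mem_filter.1 this).1
  intro a ha a' ha' hne
  rcases hne.lt_or_gt with hlt | hlt
  exacts [key a ha a' ha' hlt, (key a' ha' a ha hlt).symm]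

theorem card_initSeg (s : Finset (Fin n)) :
    #(initSeg s) = 1 + ∑ a ∈ s, (a : ℕ).choose (rankIn s a) := by
  have hs : s ∉ s.biUnion (initSegBlock s) := by
    simp only [mem_biUnion, mem_initSegBlock, not_exists, not_and]
    exact fun a ha _ hna => (hna ha).elim
  rw [initSeg_eq_insert_biUnion_initSegBlock, card_insert_of_notMem hs,
    card_biUnion (pairwiseDisjoint_initSegBlock s), add_comm]
  simp only [card_initSegBlock]

theorem card_shadow_initSeg (hs : s.Nonempty) :
    #(∂ (initSeg s)) = ∑ a ∈ s, (a : ℕ).choose (rankIn s a - 1) := by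
  set m := s.min' hs
  have hm : m ∈ s := s.min'_mem hs
  rw [shadow_initSeg hs, card_initSeg, ← add_sum_erase s _ hm, rankIn_min' hs, Nat.sub_self, Nat.choose_zero_right]
  congr 1
  refine sum_congr rfl fun a ha => ?_
  rw [rankIn_erase_of_le hm (s.min'_le a (mem_of_mem_erase ha))]

lemma lt_rankIn_add_of_card_initSeg_le (h : #(initSeg s) ≤ (#s + t).choose #s)
    (ha : a ∈ s) : (a : ℕ) < rankIn s a + t := by
  have hs : s.Nonempty := ⟨a, ha⟩
  have hmax : (s.max' hs : ℕ) < #s + t := by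
    by_contra! hle
    have : (s.max' hs : ℕ).choose (rankIn s (s.max' hs)) ≤ ∑ c ∈ s, (c : ℕ).choose (rankIn s c) :=
      single_le_sum (f := fun c : Fin n => (c : ℕ).choose (rankIn s c))
        (fun _ _ => Nat.zero_le _) (s.max'_mem hs)
    rw [rankIn_max'] at this
    have := Nat.choose_le_choose #s hle
    rw [card_initSeg] at h
    omega
  have := add_card_le_max'_add_rankIn hs ha
  omega

theorem card_mul_card_initSeg_le_mul_card_shadow (hs : s.Nonempty)
    (h : #(initSeg s) ≤ (#s + t).choose #s) :
    #s * #(initSeg s) ≤ (2 * t + 1) * #(∂ (initSeg s)) := by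
  set w : Fin n → ℕ := fun a => (a : ℕ).choose (rankIn s a)
  set v : Fin n → ℕ := fun a => (a : ℕ).choose (rankIn s a - 1)
  have hweight : ∑ a ∈ s, w a * rankIn s a ≤ t * ∑ a ∈ s, v a := by
    rw [mul_sum]
    refine sum_le_sum fun a ha => ?_
    obtain ⟨r, hr⟩ := Nat.exists_eq_add_of_lt (rankIn_pos ha)
    have hpascal := Nat.choose_succ_right_eq (a : ℕ) r
    have := lt_rankIn_add_of_card_initSeg_le h ha
    simp only [w, v, hr, zero_add, Nat.add_sub_cancel] at hpascal this ⊢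
    rw [hpascal, mul_comm t]
    exact Nat.mul_le_mul_left _ (by omega)
  have hcheb : (∑ a ∈ s, w a) * ∑ a ∈ s, rankIn s a ≤ #s * ∑ a ∈ s, w a * rankIn s a :=
    MonovaryOn.sum_mul_sum_le_card_mul_sum fun a _ b hb hr =>
      choose_rankIn_le_choose_rankIn hb (lt_of_not_ge fun hba => hr.not_ge (rankIn_mono hba))
  have hcard : #s ≤ ∑ a ∈ s, v a :=
    card_eq_sum_ones s ▸ sum_le_sum fun a _ => Nat.choose_pos (by have := rankIn_le_succ s a; omega)
  have hsum := two_mul_sum_rankIn s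
  have hk : 0 < #s := hs.card_pos
  have hW : (#s + 1) * ∑ a ∈ s, w a ≤ 2 * t * ∑ a ∈ s, v a := by
    refine Nat.le_of_mul_le_mul_left ?_ hk
    calc #s * ((#s + 1) * ∑ a ∈ s, w a) = 2 * ((∑ a ∈ s, w a) * ∑ a ∈ s, rankIn s a) := by
          rw [← mul_assoc, ← hsum]; ring
      _ ≤ 2 * (#s * (t * ∑ a ∈ s, v a)) :=
          Nat.mul_le_mul_left _ (hcheb.trans (Nat.mul_le_mul_left _ hweight))
      _ = #s * (2 * t * ∑ a ∈ s, v a) := by ring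
  rw [card_initSeg, card_shadow_initSeg hs]
  nlinarith

end Colex

section KruskalKatona

variable {n : ℕ} {𝒜 : Finset (Finset (Fin n))} {r t : ℕ}

lemma exists_card_initSeg_eq {m : ℕ} (hm : 0 < m) (hmn : m ≤ n.choose r) :
    ∃ s : Finset (Fin n), #s = r ∧ #(Colex.initSeg s) = m := by
  set F := (powersetCard r (univ : Finset (Fin n))).map toColex.toEmbedding
  obtain ⟨x, hx, hrank⟩ := exists_rankIn_eq F hm (by simpa [F] using hmn)
  obtain ⟨s, hs, rfl⟩ := mem_map.1 hx
  have hsr : #s = r := (mem_powersetCard.1 hs).2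
  refine ⟨s, hsr, hrank ▸ ?_⟩
  rw [rankIn, ← card_map toColex.toEmbedding]
  congr 1
  ext u
  obtain ⟨u, rfl⟩ := toColex.surjective u
  simp [F, Colex.mem_initSeg, hsr, eq_comm]

theorem card_mul_le_card_shadow (h𝒜 : (𝒜 : Set (Finset (Fin n))).Sized r)
    (hcard : #𝒜 ≤ (r + t).choose r) : r * #𝒜 ≤ (2 * t + 1) * #(∂ 𝒜) := by
  rcases Nat.eq_zero_or_pos #𝒜 with h0 | hpos
  · simp [h0]
  obtain ⟨s, hsr, hs𝒜⟩ := exists_card_initSeg_eq hpos (by simpa using h𝒜.card_le)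
  rcases r.eq_zero_or_pos with rfl | hr
  · simp
  have hkk : #(∂ (Colex.initSeg s)) ≤ #(∂ 𝒜) :=
    kruskal_katona h𝒜 hs𝒜.le (hsr ▸ Colex.isInitSeg_initSeg)
  calc r * #𝒜 = #s * #(Colex.initSeg s) := by rw [hsr, hs𝒜]
    _ ≤ (2 * t + 1) * #(∂ (Colex.initSeg s)) :=
        Colex.card_mul_card_initSeg_le_mul_card_shadow (card_pos.1 (hsr ▸ hr)) (by rwa [hsr, hs𝒜])
    _ ≤ (2 * t + 1) * #(∂ 𝒜) := Nat.mul_le_mul_left _ hkk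

theorem card_mul_le_card_upShadow (h𝒜 : (𝒜 : Set (Finset (Fin n))).Sized r)
    (hcard : #𝒜 ≤ (n - r + t).choose (n - r)) : (n - r) * #𝒜 ≤ (2 * t + 1) * #(∂⁺ 𝒜) := by
  have h := card_mul_le_card_shadow (𝒜 := 𝒜ᶜˢ) (r := n - r) (t := t)
    (by simpa only [Fintype.card_fin] using h𝒜.compls) (by rwa [card_compls])
  rwa [card_compls, shadow_compls, card_compls] at h

theorem card_mul_le_card_shadow_add_card_upShadow (h𝒜 : (𝒜 : Set (Finset (Fin n))).Sized r)
    (hcard : #𝒜 ≤ (n / 2 + t).choose t) :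
    n * #𝒜 ≤ 2 * (2 * t + 1) * (#(∂ 𝒜) + #(∂⁺ 𝒜)) := by
  have hchoose : ∀ j, n ≤ 2 * j → #𝒜 ≤ (j + t).choose j := fun j hj =>
    hcard.trans <| (Nat.choose_le_choose t (show n / 2 + t ≤ j + t by omega)).trans
      Nat.choose_symm_add.ge
  rcases le_or_gt n (2 * r) with hr | hr
  · calc n * #𝒜 ≤ 2 * (r * #𝒜) := by rw [← mul_assoc]; exact Nat.mul_le_mul_right _ hr
      _ ≤ 2 * ((2 * t + 1) * #(∂ 𝒜)) :=
          Nat.mul_le_mul_left _ (card_mul_le_card_shadow h𝒜 (hchoose r hr))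
      _ ≤ 2 * (2 * t + 1) * (#(∂ 𝒜) + #(∂⁺ 𝒜)) := by
          rw [← mul_assoc]; exact Nat.mul_le_mul_left _ (Nat.le_add_right _ _)
  · calc n * #𝒜 ≤ 2 * ((n - r) * #𝒜) := by
          rw [← mul_assoc]; exact Nat.mul_le_mul_right _ (by omega)
      _ ≤ 2 * ((2 * t + 1) * #(∂⁺ 𝒜)) :=
          Nat.mul_le_mul_left _ (card_mul_le_card_upShadow h𝒜 (hchoose _ (by omega)))
      _ ≤ 2 * (2 * t + 1) * (#(∂ 𝒜) + #(∂⁺ 𝒜)) := by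
          rw [← mul_assoc]; exact Nat.mul_le_mul_left _ (Nat.le_add_left _ _)

end KruskalKatona

section Shadow

variable {α : Type*} [Fintype α] [DecidableEq α]

lemma sum_card_shadow_slice_le (𝒜 : Finset (Finset α)) :
    ∑ r ∈ Iic (Fintype.card α), #(∂ (𝒜 # r)) ≤ #(∂ 𝒜) := by
  rw [← card_biUnion]
  · exact card_le_card (biUnion_subset.2 fun r _ => shadow_mono slice_subset)
  · intro r _ r' _ hne
    refine disjoint_left.2 fun u hu hu' => hne ?_
    obtain ⟨a, ha, hau⟩ := mem_shadow_iff_insert_mem.1 hu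
    obtain ⟨b, hb, hbu⟩ := mem_shadow_iff_insert_mem.1 hu'
    rw [← sized_slice hau, ← sized_slice hbu, card_insert_of_notMem ha, card_insert_of_notMem hb]

lemma sum_card_upShadow_slice_le (𝒜 : Finset (Finset α)) :
    ∑ r ∈ Iic (Fintype.card α), #(∂⁺ (𝒜 # r)) ≤ #(∂⁺ 𝒜) := by
  rw [← card_biUnion]
  · exact card_le_card (biUnion_subset.2 fun r _ => upShadow_monotone slice_subset)
  · intro r _ r' _ hne
    refine disjoint_left.2 fun u hu hu' => hne ?_
    have := sized_slice.upShadow hu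
    have := sized_slice.upShadow hu'
    omega

lemma exists_card_symmDiff_eq_one_of_mem_shadow_union_upShadow
    {𝒜 : Finset (Finset α)} {t : Finset α} (ht : t ∈ ∂ 𝒜 ∪ ∂⁺ 𝒜) :
    ∃ s ∈ 𝒜, #(s ∆ t) = 1 := by
  rcases mem_union.1 ht with ht | ht
  · obtain ⟨s, hs, a, ha, rfl⟩ := mem_shadow_iff.1 ht
    refine ⟨s, hs, card_eq_one.2 ⟨a, ?_⟩⟩
    ext b
    by_cases hb : b = a <;> simp [mem_symmDiff, hb, ha]
  · obtain ⟨s, hs, a, ha, rfl⟩ := mem_upShadow_iff.1 ht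
    refine ⟨s, hs, card_eq_one.2 ⟨a, ?_⟩⟩
    ext b
    by_cases hb : b = a <;> simp [mem_symmDiff, hb, ha]

end Shadow

theorem card_mul_le_card_shadow_union_upShadow {n t : ℕ} (𝒜 : Finset (Finset (Fin n)))
    (hcard : #𝒜 ≤ (n / 2 + t).choose t) :
    n * #𝒜 ≤ 4 * (2 * t + 1) * #(∂ 𝒜 ∪ ∂⁺ 𝒜) := by
  have hslice : ∀ r, n * #(𝒜 # r) ≤ 2 * (2 * t + 1) * (#(∂ (𝒜 # r)) + #(∂⁺ (𝒜 # r))) :=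
    fun r => card_mul_le_card_shadow_add_card_upShadow sized_slice
      ((card_le_card slice_subset).trans hcard)
  have hsum := sum_card_slice 𝒜
  rw [Fintype.card_fin] at hsum
  calc n * #𝒜 = ∑ r ∈ Iic n, n * #(𝒜 # r) := by rw [← mul_sum, hsum]
    _ ≤ 2 * (2 * t + 1) * (∑ r ∈ Iic n, #(∂ (𝒜 # r)) + ∑ r ∈ Iic n, #(∂⁺ (𝒜 # r))) := by
        rw [← sum_add_distrib, mul_sum]; exact sum_le_sum fun r _ => hslice r
    _ ≤ 2 * (2 * t + 1) * (#(∂ 𝒜) + #(∂⁺ 𝒜)) := by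
        have h₁ := sum_card_shadow_slice_le 𝒜
        have h₂ := sum_card_upShadow_slice_le 𝒜
        rw [Fintype.card_fin] at h₁ h₂
        gcongr
    _ ≤ 4 * (2 * t + 1) * #(∂ 𝒜 ∪ ∂⁺ 𝒜) := by
        have h₁ := card_le_card (subset_union_left (s₁ := ∂ 𝒜) (s₂ := ∂⁺ 𝒜))
        have h₂ := card_le_card (subset_union_right (s₁ := ∂ 𝒜) (s₂ := ∂⁺ 𝒜))
        nlinarith

end Finset

section Cube

variable {d : ℕ}

def cubeSupport (v : Fin d → Bool) : Finset (Fin d) := {i | v i = true}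

lemma cubeSupport_injective : Function.Injective (cubeSupport (d := d)) := by
  intro u v h
  funext i
  have := congrArg (i ∈ ·) h
  simp only [cubeSupport, mem_filter, mem_univ, true_and, eq_iff_iff] at this
  cases hu : u i <;> cases hv : v i <;> simp_all

lemma cubeSupport_surjective : Function.Surjective (cubeSupport (d := d)) :=
  fun s => ⟨fun i => decide (i ∈ s), by ext; simp [cubeSupport]⟩

lemma cube_adj_iff {u v : Fin d → Bool} :
    (cube d).Adj u v ↔ #(cubeSupport u ∆ cubeSupport v) = 1 := by
  change hammingDist u v = 1 ↔ _
  rw [hammingDist]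
  congr! 2
  ext i
  simp only [cubeSupport, mem_filter, mem_univ, true_and, mem_symmDiff]
  cases u i <;> cases v i <;> simp

lemma card_shadow_union_upShadow_image_cubeSupport_le_ncard_nbhd (A : Finset (Fin d → Bool)) :
    #(∂ (A.image cubeSupport) ∪ ∂⁺ (A.image cubeSupport)) ≤
      (nbhd (A : Set (Fin d → Bool))).ncard := by
  rw [Set.ncard_eq_toFinset_card _ (Set.toFinite _)]
  refine (card_le_card fun t ht => ?_).trans (card_image_le (f := cubeSupport))
  obtain ⟨s, hs, hst⟩ := exists_card_symmDiff_eq_one_of_mem_shadow_union_upShadow ht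
  obtain ⟨a, ha, rfl⟩ := mem_image.1 hs
  obtain ⟨v, rfl⟩ := cubeSupport_surjective t
  exact mem_image_of_mem _ ((Set.toFinite _).mem_toFinset.2 ⟨a, ha, cube_adj_iff.2 hst⟩)

end Cube

open Nat in
lemma rpow_le_choose_half_add {C : ℝ} {t d : ℕ} (hC : C + 1 ≤ t) (hd : 2 ^ t * t ! ≤ d) :
    (d : ℝ) ^ C ≤ (d / 2 + t).choose t := by
  have hdR : (2 : ℝ) ^ t * t ! ≤ d := by exact_mod_cast hd
  have hd1 : (1 : ℝ) ≤ d := le_trans (one_le_mul_of_one_le_of_one_le (one_le_pow₀ one_le_two)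
    (mod_cast t.factorial_pos)) hdR
  have hdpos : (0 : ℝ) < d := by linarith
  have hhalf : (d : ℝ) ≤ 2 * ((d / 2 + t + 1 - t : ℕ) : ℝ) := by
    exact_mod_cast (show d ≤ 2 * (d / 2 + t + 1 - t) by omega)
  calc (d : ℝ) ^ C ≤ (d : ℝ) ^ ((t : ℝ) - 1) := Real.rpow_le_rpow_of_exponent_le hd1 (by linarith)
    _ = (d : ℝ) ^ t / d := by rw [Real.rpow_sub hdpos, Real.rpow_one, Real.rpow_natCast]
    _ ≤ (d : ℝ) ^ t / (2 ^ t * t !) := by gcongr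
    _ = ((d : ℝ) / 2) ^ t / t ! := by rw [div_pow]; field_simp
    _ ≤ ((d / 2 + t + 1 - t : ℕ) : ℝ) ^ t / t ! := by gcongr; linarith
    _ ≤ (d / 2 + t).choose t := Nat.pow_le_choose t _

/-- Isoperimetry for small sets: for each fixed `C`, there is `c > 0` such that for
all large `d`, every set `A` of even vertices with `|A| ≤ d^C` satisfies
`|N(A)| ≥ c·d·|A|`. -/
theorem isoperimetry_small_sets (C : ℝ) :
    ∃ c : ℝ, 0 < c ∧ ∃ d₀ : ℕ, ∀ d : ℕ, d₀ ≤ d →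
      ∀ A : Set (Fin d → Bool), (∀ v ∈ A, isEvenVtx v) →
        (A.ncard : ℝ) ≤ (d : ℝ) ^ C →
        c * d * A.ncard ≤ ((nbhd A).ncard : ℝ) := by
  set t := ⌈C⌉₊ + 1
  refine ⟨1 / (4 * (2 * t + 1)), by positivity, 2 ^ t * t.factorial, fun d hd A _ hA => ?_⟩
  set F := (Set.toFinite A).toFinset
  have hF : #(F.image cubeSupport) = A.ncard := by
    rw [card_image_of_injective _ cubeSupport_injective, Set.ncard_eq_toFinset_card A]
  have hsmall : #(F.image cubeSupport) ≤ (d / 2 + t).choose t := by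
    have := hA.trans (rpow_le_choose_half_add (by push_cast [t]; linarith [Nat.le_ceil C]) hd)
    rw [hF]; exact_mod_cast this
  have key := (card_mul_le_card_shadow_union_upShadow _ hsmall).trans
    (Nat.mul_le_mul_left _ (card_shadow_union_upShadow_image_cubeSupport_le_ncard_nbhd F))
  rw [hF, Set.Finite.coe_toFinset] at key
  have keyR : (d : ℝ) * A.ncard ≤ 4 * (2 * t + 1) * (nbhd A).ncard := by exact_mod_cast key
  rw [div_mul_eq_mul_div, div_mul_eq_mul_div, one_mul, div_le_iff₀ (by positivity)]
  linarith
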